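/- arXiv:math/0511470 — 2 statements merged into one kernel-verified Lean document; each statement's English description precedes it below -/
import Mathlib

section
/- Suppose F_{n⃗} is an |n⃗|-dimensional subspace of L²(ℝ), |n⃗| = |m⃗| + 1, and fix k ∈ {1,…,q}. Then every nonzero linear form Q ∈ F_{n⃗} ∩ G_{m⃗}⊥ satisfies ∫ Q(x) x^{mₖ} w₂ₖ(x) dx ≠ 0 if and only if F_{n⃗} ∩ G_{m⃗+e⃗ₖ}⊥ = {0}. -/
open MeasureTheory Polynomial

/-- The space F_{n⃗}: the span in functions on ℝ of xʲ·w₁ₗ(x), 0 ≤ j ≤ nₗ−1. -/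
noncomputable def mixedF {p : ℕ} (w1 : Fin p → ℝ → ℝ) (n : Fin p → ℕ) :
    Submodule ℝ (ℝ → ℝ) :=
  Submodule.span ℝ {f | ∃ l : Fin p, ∃ j : ℕ, j < n l ∧ f = fun x => x ^ j * w1 l x}

/-- The "orthogonal complement of G_{m⃗}": functions Q such that Q·xʲ·w₂ₖ is
integrable with vanishing integral for 0 ≤ j ≤ mₖ−1, k = 1,…,q. -/
noncomputable def mixedGperp {q : ℕ} (w2 : Fin q → ℝ → ℝ) (m : Fin q → ℕ) :
    Submodule ℝ (ℝ → ℝ) where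
  carrier := {Q | ∀ k : Fin q, ∀ j, j < m k →
    Integrable (fun x => Q x * (x ^ j * w2 k x)) ∧
      (∫ x, Q x * (x ^ j * w2 k x)) = 0}
  zero_mem' := by
    intro k j hj
    constructor
    · simpa using (integrable_zero ℝ ℝ (volume : Measure ℝ))
    · simp
  add_mem' := by
    intro a b ha hb k j hj
    obtain ⟨hai, haz⟩ := ha k j hj
    obtain ⟨hbi, hbz⟩ := hb k j hj
    constructor
    · have h2 : (fun x => (a + b) x * (x ^ j * w2 k x)) =
        fun x => a x * (x ^ j * w2 k x) + b x * (x ^ j * w2 k x) := by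
        funext x; simp [add_mul]
      rw [h2]; exact hai.add hbi
    · have h : (fun x => (a + b) x * (x ^ j * w2 k x)) =
        fun x => a x * (x ^ j * w2 k x) + b x * (x ^ j * w2 k x) := by
        funext x; simp [add_mul]
      rw [h, integral_add hai hbi, haz, hbz, add_zero]
  smul_mem' := by
    intro c a ha k j hj
    obtain ⟨hai, haz⟩ := ha k j hj
    have h : (fun x => (c • a) x * (x ^ j * w2 k x)) =
        fun x => c * (a x * (x ^ j * w2 k x)) := by
      funext x; simp [mul_assoc]
    constructor
    · rw [h]; exact hai.const_mul c
    · rw [h, integral_const_mul, haz, mul_zero]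

/-- Q is a linear form of multiple orthogonal polynomials of mixed type for the
pair (n⃗, m⃗). -/
noncomputable def IsMixedForm {p q : ℕ} (w1 : Fin p → ℝ → ℝ) (w2 : Fin q → ℝ → ℝ)
    (n : Fin p → ℕ) (m : Fin q → ℕ) (Q : ℝ → ℝ) : Prop :=
  (∃ A : Fin p → Polynomial ℝ, (∀ i, (A i).degree < (n i : ℕ)) ∧
     Q = fun x => ∑ i, (A i).eval x * w1 i x) ∧
  ∀ k : Fin q, ∀ j, j < m k → (∫ x, Q x * (x ^ j * w2 k x)) = 0

lemma integrable_mul_of_mem_mixedF {p : ℕ} (w1 : Fin p → ℝ → ℝ) (n : Fin p → ℕ) (g : ℝ → ℝ)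
    (h : ∀ l j, j < n l → Integrable (fun x : ℝ => (x ^ j * w1 l x) * g x))
    {Q : ℝ → ℝ} (hQ : Q ∈ mixedF w1 n) :
    Integrable (fun x : ℝ => Q x * g x) := by
  induction hQ using Submodule.span_induction with
  | mem f hf =>
    obtain ⟨l, j, hj, rfl⟩ := hf
    exact h l j hj
  | zero => simp
  | add a b _ _ ha hb =>
    simp only [Pi.add_apply, add_mul]
    exact ha.add hb
  | smul c a _ ha => simpa only [Pi.smul_apply, smul_eq_mul, mul_assoc] using ha.const_mul c

lemma mem_mixedGperp_update_succ_iff {q : ℕ} (w2 : Fin q → ℝ → ℝ) (m : Fin q → ℕ)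
    (k : Fin q) (Q : ℝ → ℝ) :
    Q ∈ mixedGperp w2 (Function.update m k (m k + 1)) ↔
      Q ∈ mixedGperp w2 m ∧ Integrable (fun x => Q x * (x ^ m k * w2 k x)) ∧
        ∫ x, Q x * (x ^ m k * w2 k x) = 0 := by
  constructor
  · intro hQ
    refine ⟨fun k' j hj => hQ k' j ?_, hQ k (m k) (by simp)⟩
    rcases eq_or_ne k' k with rfl | hne
    · simp only [Function.update_self]; omega
    · rwa [Function.update_of_ne hne]
  · rintro ⟨hQ, hlast⟩ k' j hj
    rcases eq_or_ne k' k with rfl | hne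
    · rw [Function.update_self] at hj
      rcases Nat.lt_succ_iff_lt_or_eq.mp hj with hj | rfl
      · exact hQ k' j hj
      · exact hlast
    · rw [Function.update_of_ne hne] at hj
      exact hQ k' j hj

theorem stmt10_general (p q : ℕ) (w1 : Fin p → ℝ → ℝ) (w2 : Fin q → ℝ → ℝ)
    (n : Fin p → ℕ) (m : Fin q → ℕ) (k : Fin q)
    (hInt : ∀ (l : Fin p) (j : ℕ), j < n l → ∀ (k' : Fin q) (i : ℕ),
      i < Function.update m k (m k + 1) k' →
      Integrable (fun x : ℝ => (x ^ j * w1 l x) * (x ^ i * w2 k' x))) :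
    (∀ Q ∈ mixedF w1 n ⊓ mixedGperp w2 m, Q ≠ 0 →
      (∫ x, Q x * (x ^ (m k) * w2 k x)) ≠ 0) ↔
    mixedF w1 n ⊓ mixedGperp w2 (Function.update m k (m k + 1)) = ⊥ := by
  constructor
  · intro hnonvanishing
    rw [Submodule.eq_bot_iff]
    rintro Q ⟨hF, hG⟩
    by_contra hQ
    obtain ⟨hGm, -, hzero⟩ := (mem_mixedGperp_update_succ_iff w2 m k Q).1 hG
    exact hnonvanishing Q ⟨hF, hGm⟩ hQ hzero
  · rintro hbot Q ⟨hF, hG⟩ hQ hzero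
    have hint : Integrable (fun x => Q x * (x ^ m k * w2 k x)) :=
      integrable_mul_of_mem_mixedF w1 n _ (fun l j hj => hInt l j hj k (m k) (by simp)) hF
    exact hQ ((Submodule.eq_bot_iff _).1 hbot Q
      ⟨hF, (mem_mixedGperp_update_succ_iff w2 m k Q).2 ⟨hG, hint, hzero⟩⟩)

/-- Lemma 2.2(c): every nonzero linear form Q ∈ F_{n⃗} ∩ G_{m⃗}⊥ satisfies
∫ Q(x) x^{mₖ} w₂ₖ(x) dx ≠ 0 iff F_{n⃗} ∩ G_{m⃗+e⃗ₖ}⊥ = {0}. -/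
theorem stmt10 (p q : ℕ) (w1 : Fin p → ℝ → ℝ) (w2 : Fin q → ℝ → ℝ)
    (n : Fin p → ℕ) (m : Fin q → ℕ) (k : Fin q)
    (hInt : ∀ (l : Fin p) (j : ℕ), j < n l → ∀ (k' : Fin q) (i : ℕ),
      i < Function.update m k (m k + 1) k' →
      Integrable (fun x : ℝ => (x ^ j * w1 l x) * (x ^ i * w2 k' x)))
    (hdim : Module.finrank ℝ (mixedF w1 n) = ∑ i, n i)
    (hnm : ∑ i, n i = ∑ k', m k' + 1) :
    (∀ Q ∈ mixedF w1 n ⊓ mixedGperp w2 m, Q ≠ 0 →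
      (∫ x, Q x * (x ^ (m k) * w2 k x)) ≠ 0) ↔
    mixedF w1 n ⊓ mixedGperp w2 (Function.update m k (m k + 1)) = ⊥ :=
  stmt10_general p q w1 w2 n m k hInt
end

section
/- For distinct real numbers β₁,…,β_p and positive integers n₁,…,n_p with n = n₁+⋯+n_p, the functions e^{β₁x}, xe^{β₁x}, …, x^{n₁−1}e^{β₁x}, …, e^{β_px}, …, x^{n_p−1}e^{β_px} are linearly independent over ℝ, and moreover any nonzero linear combination of them has at most n − 1 real zeros (counting without multiplicity). -/
/-!
Write a combination as f(x) = ∑ₗ Pₗ(x) e^{βₗx} with deg Pₗ < nₗ. Multiplying by e^{-β_{l₀}x}, where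
P_{l₀} ≠ 0, does not change the zero set and makes the exponent of the l₀-th term vanish.
Differentiating then replaces Pₗ by Pₗ' + (βₗ - β_{l₀}) Pₗ: the degree bound drops by one at l₀ and
is kept elsewhere. By Rolle, f has at most one zero more than f', so induction on ∑ nₗ bounds the
number of zeros by ∑ nₗ - 1. The induction ends when the derivative vanishes identically, which
forces f to be a nonzero constant multiple of e^{β_{l₀}x}. A finite zero set rules out f ≡ 0, giving
linear independence.
-/

open Polynomial Set

theorem Set.finite_and_ncard_le_ncard_add_one_of_interleaved {α : Type*} [LinearOrder α]
    {S T : Set α} (hT : T.Finite) (h : ∀ x ∈ S, ∀ y ∈ S, x < y → ∃ z ∈ T, x < z ∧ z < y) :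
    S.Finite ∧ S.ncard ≤ T.ncard + 1 := by
  have hsub : ∀ s : Finset α, ↑s ⊆ S → s.card ≤ T.ncard + 1 := fun s hs => by
    rw [ncard_eq_toFinset_card T hT]
    exact Finset.card_le_of_interleaved fun x hx y hy hxy _ => by
      simpa using h x (hs hx) y (hs hy) hxy
  have hS : S.Finite := by
    by_contra hinf
    obtain ⟨s, hs, hcard⟩ := Set.Infinite.exists_subset_card_eq hinf (T.ncard + 2)
    have := hsub s hs
    omega
  exact ⟨hS, by simpa [ncard_eq_toFinset_card S hS] using hsub hS.toFinset (by simp)⟩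

theorem finite_and_ncard_zeros_le_of_hasDerivAt {f f' : ℝ → ℝ}
    (hf : ∀ x, HasDerivAt f (f' x) x) (hf' : {x | f' x = 0}.Finite) :
    {x | f x = 0}.Finite ∧ {x | f x = 0}.ncard ≤ {x | f' x = 0}.ncard + 1 := by
  refine Set.finite_and_ncard_le_ncard_add_one_of_interleaved hf' fun x hx y hy hxy => ?_
  have hcont : Continuous f := continuous_iff_continuousAt.2 fun x => (hf x).continuousAt
  obtain ⟨z, hz, hz0⟩ := exists_hasDerivAt_eq_zero hxy hcont.continuousOn
    (hx.trans hy.symm) fun z _ => hf z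
  exact ⟨z, hz0, hz⟩

namespace Polynomial

variable {R : Type*}

theorem degree_derivative_lt_pred [Semiring R] {p : R[X]} {n : ℕ} (hp : p.degree < n) :
    (derivative p).degree < ↑(n - 1) := by
  rw [degree_lt_iff_coeff_zero] at hp ⊢
  intro m hm
  rw [coeff_derivative, hp (m + 1) (by omega), zero_mul]

theorem degree_derivative_add_C_mul_lt [Semiring R] {p : R[X]} {n : ℕ} (hp : p.degree < n)
    (a : R) : (derivative p + C a * p).degree < n := by
  rw [degree_lt_iff_coeff_zero] at hp ⊢
  intro m hm
  simp [coeff_derivative, hp m hm, hp (m + 1) (by omega)]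

theorem eq_zero_of_derivative_add_C_mul_eq_zero [Semiring R] [NoZeroDivisors R] {p : R[X]}
    {a : R} (ha : a ≠ 0) (h : derivative p + C a * p = 0) : p = 0 := by
  by_contra hp
  have := congrArg (coeff · p.natDegree) h
  simp [coeff_derivative, ha, hp] at this

theorem coeff_sum_range_C_mul_X_pow [Semiring R] (f : ℕ → R) (n j : ℕ) :
    (∑ i ∈ Finset.range n, C (f i) * X ^ i).coeff j = if j < n then f j else 0 := by
  simp [finsetSum_coeff]

end Polynomial

noncomputable def expPolyEval {ι : Type*} [Fintype ι] (β : ι → ℝ) (P : ι → ℝ[X]) (x : ℝ) : ℝ :=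
  ∑ l, (P l).eval x * Real.exp (β l * x)

section expPolyEval

variable {ι : Type*} [Fintype ι]

theorem hasDerivAt_expPolyEval (β : ι → ℝ) (P : ι → ℝ[X]) (x : ℝ) :
    HasDerivAt (expPolyEval β P)
      (expPolyEval β (fun l => derivative (P l) + C (β l) * P l) x) x := by
  unfold expPolyEval
  refine HasDerivAt.fun_sum fun l _ => ?_
  refine (((P l).hasDerivAt x).fun_mul (((hasDerivAt_id' x).const_mul (β l)).exp)).congr_deriv ?_
  simp only [eval_add, eval_mul, eval_C]
  ring

theorem expPolyEval_eq_exp_mul (β : ι → ℝ) (P : ι → ℝ[X]) (b x : ℝ) :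
    expPolyEval β P x = Real.exp (b * x) * expPolyEval (fun l => β l - b) P x := by
  simp only [expPolyEval, Finset.mul_sum]
  refine Finset.sum_congr rfl fun l _ => ?_
  rw [mul_left_comm, ← Real.exp_add]
  ring_nf

theorem expPolyEval_of_eq_zero_of_ne {β : ι → ℝ} {P : ι → ℝ[X]} {l₀ : ι}
    (hP : ∀ l, l ≠ l₀ → P l = 0) (x : ℝ) :
    expPolyEval β P x = (P l₀).eval x * Real.exp (β l₀ * x) :=
  Fintype.sum_eq_single l₀ fun l hl => by simp [hP l hl]

theorem expPolyEval_ne_zero_of_forall_derivative_add_C_mul_eq_zero {β : ι → ℝ}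
    (hβ : Function.Injective β) {P : ι → ℝ[X]} {l₀ : ι} (hl₀ : P l₀ ≠ 0)
    (hP : ∀ l, derivative (P l) + C (β l) * P l = 0) (x : ℝ) : expPolyEval β P x ≠ 0 := by
  have hβl₀ : β l₀ = 0 := by
    by_contra h
    exact hl₀ (eq_zero_of_derivative_add_C_mul_eq_zero h (hP l₀))
  have hPl : ∀ l, l ≠ l₀ → P l = 0 := fun l hl =>
    eq_zero_of_derivative_add_C_mul_eq_zero (hβl₀ ▸ hβ.ne hl) (hP l)
  have hconst : P l₀ = C ((P l₀).coeff 0) :=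
    eq_C_of_derivative_eq_zero (by simpa [hβl₀] using hP l₀)
  rw [expPolyEval_of_eq_zero_of_ne hPl, hconst, eval_C]
  rw [hconst, Ne, C_eq_zero] at hl₀
  exact mul_ne_zero hl₀ (Real.exp_ne_zero _)

theorem finite_and_ncard_zeros_expPolyEval_lt {β : ι → ℝ} (hβ : Function.Injective β)
    {P : ι → ℝ[X]} {n : ι → ℕ}
    (hdeg : ∀ l, (P l).degree < n l) (hP : ∃ l, P l ≠ 0) :
    {x | expPolyEval β P x = 0}.Finite ∧ {x | expPolyEval β P x = 0}.ncard < ∑ l, n l := by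
  classical
  induction hN : ∑ l, n l using Nat.strong_induction_on generalizing β P n with
  | _ N IH =>
  obtain ⟨l₀, hl₀⟩ := hP
  have hn₀ : n l₀ ≠ 0 := fun h => hl₀ <| by simpa [h] using hdeg l₀
  set n' := Function.update n l₀ (n l₀ - 1)
  have hN' : ∑ l, n' l + 1 = N := by
    rw [← hN, Finset.sum_update_of_mem (Finset.mem_univ l₀),
      ← Finset.add_sum_erase _ _ (Finset.mem_univ l₀), Finset.sdiff_singleton_eq_erase]
    omega
  set γ := fun l => β l - β l₀
  have hγ : Function.Injective γ := fun a b h => hβ (sub_left_inj.1 h)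
  have hzeros : {x | expPolyEval β P x = 0} = {x | expPolyEval γ P x = 0} := by
    ext x
    simp [expPolyEval_eq_exp_mul β P (β l₀) x, Real.exp_ne_zero, γ]
  rw [hzeros]
  set Q := fun l => derivative (P l) + C (γ l) * P l
  by_cases hQ : ∃ l, Q l ≠ 0
  · have hdegQ : ∀ l, (Q l).degree < n' l := by
      intro l
      rcases eq_or_ne l l₀ with rfl | hl
      · simpa [Q, γ, n'] using degree_derivative_lt_pred (hdeg l)
      · simpa [n', hl] using degree_derivative_add_C_mul_lt (hdeg l) (γ l)
    obtain ⟨hfinQ, hcardQ⟩ := IH _ (by omega) hγ hdegQ hQ rfl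
    have hderiv : ∀ x, HasDerivAt (expPolyEval γ P) (expPolyEval γ Q x) x :=
      hasDerivAt_expPolyEval γ P
    obtain ⟨hfin, hcard⟩ := finite_and_ncard_zeros_le_of_hasDerivAt hderiv hfinQ
    exact ⟨hfin, by omega⟩
  · push Not at hQ
    have hempty : {x | expPolyEval γ P x = 0} = ∅ :=
      eq_empty_of_forall_notMem
        (expPolyEval_ne_zero_of_forall_derivative_add_C_mul_eq_zero hγ hl₀ hQ)
    simp only [hempty, finite_empty, ncard_empty, true_and]
    omega

theorem finite_and_ncard_zeros_sum_lt {β : ι → ℝ} (hβ : Function.Injective β) {n : ι → ℕ}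
    {c : ι → ℕ → ℝ} (hc : ¬ ∀ l, ∀ j < n l, c l j = 0) :
    {x : ℝ | ∑ l, ∑ j ∈ Finset.range (n l), c l j * x ^ j * Real.exp (β l * x) = 0}.Finite ∧
    {x : ℝ | ∑ l, ∑ j ∈ Finset.range (n l),
      c l j * x ^ j * Real.exp (β l * x) = 0}.ncard < ∑ l, n l := by
  set P : ι → ℝ[X] := fun l => ∑ j ∈ Finset.range (n l), C (c l j) * X ^ j
  have hcoeff : ∀ l j, (P l).coeff j = if j < n l then c l j else 0 := fun l j =>
    coeff_sum_range_C_mul_X_pow (c l) (n l) j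
  have hdeg : ∀ l, (P l).degree < n l := fun l => by
    rw [degree_lt_iff_coeff_zero]
    intro m hm
    simp [hcoeff, not_lt.2 hm]
  have hP : ∃ l, P l ≠ 0 := by
    push Not at hc
    obtain ⟨l, j, hj, hcj⟩ := hc
    exact ⟨l, fun h => hcj (by simpa [h, hj] using (hcoeff l j).symm)⟩
  have hset : ∀ x : ℝ, ∑ l, ∑ j ∈ Finset.range (n l), c l j * x ^ j * Real.exp (β l * x)
      = expPolyEval β P x := fun x => by
    simp [expPolyEval, P, eval_finsetSum, Finset.sum_mul]
  simp only [hset]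
  exact finite_and_ncard_zeros_expPolyEval_lt hβ hdeg hP

theorem linearIndependent_pow_mul_exp {β : ι → ℝ} (hβ : Function.Injective β) {n : ι → ℕ} :
    LinearIndependent ℝ (fun li : (Σ l, Fin (n l)) =>
      fun x : ℝ => x ^ (li.2 : ℕ) * Real.exp (β li.1 * x)) := by
  rw [Fintype.linearIndependent_iff]
  intro g hg
  set c : ι → ℕ → ℝ := fun l j => if h : j < n l then g ⟨l, ⟨j, h⟩⟩ else 0
  have hzero : ∀ x : ℝ,
      ∑ l, ∑ j ∈ Finset.range (n l), c l j * x ^ j * Real.exp (β l * x) = 0 := by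
    intro x
    have hx := congrFun hg x
    simp only [Finset.sum_apply, Pi.smul_apply, smul_eq_mul, Pi.zero_apply,
      ← Finset.univ_sigma_univ, Finset.sum_sigma] at hx
    rw [← hx]
    refine Finset.sum_congr rfl fun l _ => ?_
    rw [← Fin.sum_univ_eq_sum_range (fun j => c l j * x ^ j * Real.exp (β l * x))]
    simp [c, mul_assoc]
  have hc : ∀ l, ∀ j < n l, c l j = 0 := by
    by_contra hc
    have hfin := (finite_and_ncard_zeros_sum_lt hβ hc).1
    simp only [hzero, ofPred_true] at hfin
    exact infinite_univ hfin
  rintro ⟨l, j⟩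
  simpa [c] using hc l j j.isLt

end expPolyEval

theorem stmt14_general (p : ℕ) (β : Fin p → ℝ) (hβ : Function.Injective β)
    (n : Fin p → ℕ) :
    LinearIndependent ℝ (fun li : (Σ l : Fin p, Fin (n l)) =>
      (fun x : ℝ => x ^ (li.2 : ℕ) * Real.exp (β li.1 * x))) ∧
    ∀ c : Fin p → ℕ → ℝ, (¬ ∀ l : Fin p, ∀ j < n l, c l j = 0) →
      {x : ℝ | ∑ l : Fin p, ∑ j ∈ Finset.range (n l),
          c l j * x ^ j * Real.exp (β l * x) = 0}.Finite ∧
      {x : ℝ | ∑ l : Fin p, ∑ j ∈ Finset.range (n l),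
          c l j * x ^ j * Real.exp (β l * x) = 0}.ncard ≤ (∑ l, n l) - 1 := by
  refine ⟨linearIndependent_pow_mul_exp hβ, fun c hc => ?_⟩
  obtain ⟨hfin, hcard⟩ := finite_and_ncard_zeros_sum_lt hβ hc
  exact ⟨hfin, Nat.le_sub_one_of_lt hcard⟩

/-- For distinct β₁,…,β_p, the functions xʲe^{βₗx} (0 ≤ j ≤ nₗ−1) are linearly
independent over ℝ, and any nonzero linear combination has at most
n − 1 = n₁+⋯+n_p − 1 real zeros. -/
theorem stmt14 (p : ℕ) (β : Fin p → ℝ) (hβ : Function.Injective β)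
    (n : Fin p → ℕ) (hn : ∀ l, 1 ≤ n l) :
    LinearIndependent ℝ (fun li : (Σ l : Fin p, Fin (n l)) =>
      (fun x : ℝ => x ^ (li.2 : ℕ) * Real.exp (β li.1 * x))) ∧
    ∀ c : Fin p → ℕ → ℝ, (¬ ∀ l : Fin p, ∀ j < n l, c l j = 0) →
      {x : ℝ | ∑ l : Fin p, ∑ j ∈ Finset.range (n l),
          c l j * x ^ j * Real.exp (β l * x) = 0}.Finite ∧
      {x : ℝ | ∑ l : Fin p, ∑ j ∈ Finset.range (n l),
          c l j * x ^ j * Real.exp (β l * x) = 0}.ncard ≤ (∑ l, n l) - 1 :=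
  stmt14_general p β hβ n
end
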